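/- arXiv:2003.03405 — 4 statements merged into one kernel-verified Lean document; each statement's English description precedes it below -/
import Mathlib

section
/- If a matrix M on ℂ^n commutes with an invertible antilinear map, then M is pseudo-Hermitian: there exists a Hermitian invertible matrix η with M† = η M η⁻¹. -/
/-!
Composing `Θ` with complex conjugation gives a linear bijection `A` with `M̄ A = A M`, so `M` is
similar to its conjugate `M̄ = Mᴴᵀ`. Every square matrix `N` over a field is similar to its
transpose: by the structure theorem for the `K[X]`-module defined by `N`, the endomorphism `N` is
self-adjoint for a nondegenerate bilinear form `B`, and then `Nᵀ B = B N`. Together this gives an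
invertible `S` with `Mᴴ S = S M`, hence also `Mᴴ Sᴴ = Sᴴ M`, and `η = c S + (c S)ᴴ` is a Hermitian
solution of the same equation, invertible for a suitable `c` because along `c = t + i`, `t` real,
its determinant is a nonzero polynomial in `t`.
-/

open Matrix Polynomial

section Field

variable {K : Type*} [Field K]

variable (K) in
def HasSelfAdjointXForm (W : Type*) [AddCommGroup W] [Module K[X] W] [Module K W]
    [IsScalarTower K K[X] W] : Prop :=
  ∃ B : W →ₗ[K] W →ₗ[K] K, B.SeparatingLeft ∧ B.IsAdjointPair B ((X : K[X]) • ·) ((X : K[X]) • ·)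

theorem HasSelfAdjointXForm.of_linearEquiv {W W' : Type*} [AddCommGroup W] [Module K[X] W]
    [Module K W] [IsScalarTower K K[X] W] [AddCommGroup W'] [Module K[X] W'] [Module K W']
    [IsScalarTower K K[X] W'] (e : W ≃ₗ[K[X]] W') (h : HasSelfAdjointXForm K W') :
    HasSelfAdjointXForm K W := by
  obtain ⟨B, hsep, hadj⟩ := h
  let e' := (e.restrictScalars K).symm
  refine ⟨e'.arrowCongr (e'.arrowCongr (LinearEquiv.refl K K)) B, hsep.congr e' e', fun a b => ?_⟩
  simpa [e'] using hadj (e a) (e b)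

theorem hasSelfAdjointXForm_pi {ι : Type*} [Fintype ι] [DecidableEq ι] {W : ι → Type*}
    [∀ i, AddCommGroup (W i)] [∀ i, Module K[X] (W i)] [∀ i, Module K (W i)]
    [∀ i, IsScalarTower K K[X] (W i)] (h : ∀ i, HasSelfAdjointXForm K (W i)) :
    HasSelfAdjointXForm K (∀ i, W i) := by
  choose B hsep hadj using h
  refine ⟨∑ i, (B i).compl₁₂ (LinearMap.proj i) (LinearMap.proj i), fun a ha => ?_, fun a b => ?_⟩
  · funext i
    refine hsep i (a i) fun y => ?_
    have hy := ha (Pi.single i y)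
    rw [LinearMap.sum_apply, LinearMap.sum_apply, Finset.sum_eq_single_of_mem i (Finset.mem_univ i)
      fun j _ hj => by simp [Pi.single_eq_of_ne hj]] at hy
    simpa using hy
  · simpa using Finset.sum_congr rfl fun i _ => hadj i (a i) (b i)

/-- The form is `(a, b) ↦` the coefficient of `X ^ (deg m - 1)` in the reduced representative of
`a * b`; multiplication by `X` is self-adjoint because the form only depends on `a * b`. -/
theorem hasSelfAdjointXForm_quotient_span_monic {m : K[X]} (hm : m.Monic) :
    HasSelfAdjointXForm K (K[X] ⧸ (K[X] ∙ m)) := by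
  let φ : K[X] ⧸ (K[X] ∙ m) →ₗ[K] K :=
    lcoeff K (m.natDegree - 1) ∘ₗ AdjoinRoot.modByMonicHom hm
  refine ⟨(LinearMap.mul K _).compr₂ φ, fun a ha => ?_, fun a b => ?_⟩
  · set g := AdjoinRoot.modByMonicHom hm a
    have hga : AdjoinRoot.mk m g = a := AdjoinRoot.mk_leftInverse hm a
    have hgg : g %ₘ m = g := by rw [← AdjoinRoot.modByMonicHom_mk hm, hga]
    by_contra ha0
    have hg0 : g ≠ 0 := by rintro hg; rw [hg, map_zero] at hga; exact ha0 hga.symm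
    set k := m.natDegree - 1 - g.natDegree
    have hgd : g.natDegree < m.natDegree :=
      natDegree_lt_natDegree hg0 (hgg ▸ degree_modByMonic_lt g hm)
    have hlt : (g * X ^ k).degree < m.degree := by
      rw [degree_mul, degree_X_pow, degree_eq_natDegree hg0, degree_eq_natDegree hm.ne_zero]
      exact_mod_cast (by omega : g.natDegree + k < m.natDegree)
    have h0 : ((g * X ^ k) %ₘ m).coeff (m.natDegree - 1) = 0 := by
      rw [← AdjoinRoot.modByMonicHom_mk hm, map_mul, hga]; exact ha _
    rw [(modByMonic_eq_self_iff hm).2 hlt, show m.natDegree - 1 = g.natDegree + k by omega,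
      coeff_mul_X_pow] at h0
    exact leadingCoeff_ne_zero.mpr hg0 h0
  · simp only [LinearMap.compr₂_apply, LinearMap.mul_apply', smul_mul_assoc, mul_smul_comm]

theorem hasSelfAdjointXForm_quotient_span {q : K[X]} (hq : q ≠ 0) :
    HasSelfAdjointXForm K (K[X] ⧸ (K[X] ∙ q)) := by
  classical
  have hspan : (K[X] ∙ q) = (K[X] ∙ normalize q) :=
    Ideal.span_singleton_eq_span_singleton.mpr (associated_normalize q)
  exact (hasSelfAdjointXForm_quotient_span_monic (monic_normalize hq)).of_linearEquiv
    (Submodule.quotEquivOfEq _ _ hspan)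

theorem LinearMap.exists_separatingLeft_isAdjointPair_self {V : Type*} [AddCommGroup V]
    [Module K V] [FiniteDimensional K V] (f : V →ₗ[K] V) :
    ∃ B : V →ₗ[K] V →ₗ[K] K, B.SeparatingLeft ∧ B.IsAdjointPair B f f := by
  classical
  obtain ⟨κ, _, p, hp, e, ⟨φ⟩⟩ := Module.equiv_directSum_of_isTorsion
    (Module.AEval.isTorsion_of_finiteDimensional K V f)
  obtain ⟨B, hsep, hadj⟩ := (hasSelfAdjointXForm_pi fun i =>
    hasSelfAdjointXForm_quotient_span (pow_ne_zero (e i) (hp i).ne_zero)).of_linearEquiv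
    (φ.trans (DirectSum.linearEquivFunOnFintype _ _ _))
  let of := Module.AEval'.of f
  refine ⟨of.symm.arrowCongr (of.symm.arrowCongr (LinearEquiv.refl K K)) B, hsep.congr _ _,
    fun x y => ?_⟩
  simpa [of, Module.AEval'.X_smul_of] using hadj (of x) (of y)

theorem Matrix.exists_isUnit_transpose_mul_eq_mul {ι : Type*} [Fintype ι] [DecidableEq ι]
    (N : Matrix ι ι K) : ∃ G : Matrix ι ι K, IsUnit G ∧ Nᵀ * G = G * N := by
  obtain ⟨B, hsep, hadj⟩ := (Matrix.toLin' N).exists_separatingLeft_isAdjointPair_self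
  refine ⟨LinearMap.toMatrix₂' K B, ?_, ?_⟩
  · rw [isUnit_iff_isUnit_det, isUnit_iff_ne_zero, ← Matrix.separatingLeft_iff_det_ne_zero,
      LinearMap.separatingLeft_toMatrix₂'_iff]
    exact hsep
  · rw [← Matrix.toLinearMap₂'_toMatrix' (R := K) B] at hadj
    exact (isAdjointPair_toLinearMap₂' _ _ _ _).mp hadj

theorem Matrix.exists_mem_det_smul_add_ne_zero {ι : Type*} [Fintype ι] [DecidableEq ι]
    (A B : Matrix ι ι K) {s : Set K} (hs : s.Infinite) {z : K} (hz : det (z • A + B) ≠ 0) :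
    ∃ t ∈ s, det (t • A + B) ≠ 0 := by
  let P : K[X] := det ((X : K[X]) • A.map C + B.map C)
  have hP : ∀ t, P.eval t = det (t • A + B) := fun t => by
    rw [← coe_evalRingHom, RingHom.map_det]
    congr 1
    ext i j
    simp [mul_comm _ t]
  have hP0 : P ≠ 0 := fun h => hz (by rw [← hP, h, eval_zero])
  obtain ⟨t, hts, ht⟩ := (hs.sdiff (P.finite_setOfPred_isRoot hP0)).nonempty
  exact ⟨t, hts, by rwa [← hP]⟩

end Field

theorem Matrix.exists_isUnit_conjTranspose_transpose_mul_eq_mul {R ι : Type*} [CommRing R]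
    [StarRing R] [Fintype ι] [DecidableEq ι] (M : Matrix ι ι R) (Θ : (ι → R) ≃ₗ⋆[R] (ι → R))
    (hΘ : ∀ v, M *ᵥ Θ v = Θ (M *ᵥ v)) : ∃ A : Matrix ι ι R, IsUnit A ∧ Mᴴᵀ * A = A * M := by
  let L : (ι → R) ≃ₗ[R] (ι → R) := Θ.trans (starLinearEquiv R)
  refine ⟨LinearMap.toMatrix' L, LinearMap.isUnit_toMatrix'_iff.mpr
    ((Module.End.isUnit_iff _).mpr L.bijective), ext_iff_mulVec.mpr fun v => ?_⟩
  simp only [← mulVec_mulVec, LinearMap.toMatrix'_mulVec, mulVec_transpose]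
  change star (Θ v) ᵥ* Mᴴ = star (Θ (M *ᵥ v))
  rw [← star_mulVec, hΘ]

theorem Matrix.exists_isUnit_smul_add_conjTranspose {ι : Type*} [Fintype ι] [DecidableEq ι]
    {S : Matrix ι ι ℂ} (hS : IsUnit S) : ∃ c : ℂ, IsUnit (c • S + (c • S)ᴴ) := by
  have hI : det (Complex.I • (S + Sᴴ) + Complex.I • (S - Sᴴ)) ≠ 0 := by
    rw [← smul_add, add_add_sub_cancel, ← two_smul ℂ S, smul_smul, det_smul]
    exact mul_ne_zero (pow_ne_zero _ (by simp)) ((isUnit_iff_isUnit_det S).mp hS).ne_zero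
  obtain ⟨_, ⟨t, rfl⟩, ht⟩ := exists_mem_det_smul_add_ne_zero _ _
    (Set.infinite_range_of_injective Complex.ofReal_injective) hI
  have hη : ((t : ℂ) + Complex.I) • S + (((t : ℂ) + Complex.I) • S)ᴴ
      = (t : ℂ) • (S + Sᴴ) + Complex.I • (S - Sᴴ) := by
    simp only [conjTranspose_smul, star_add, Complex.star_def, Complex.conj_ofReal, Complex.conj_I]
    module
  exact ⟨t + Complex.I, (isUnit_iff_isUnit_det _).mpr (isUnit_iff_ne_zero.mpr (hη ▸ ht))⟩

theorem Matrix.exists_isHermitian_isUnit_conjTranspose_mul_eq_mul {ι : Type*} [Fintype ι]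
    [DecidableEq ι] {M S : Matrix ι ι ℂ} (hS : IsUnit S) (hMS : Mᴴ * S = S * M) :
    ∃ η : Matrix ι ι ℂ, η.IsHermitian ∧ IsUnit η ∧ Mᴴ * η = η * M := by
  obtain ⟨c, hc⟩ := exists_isUnit_smul_add_conjTranspose hS
  refine ⟨c • S + (c • S)ᴴ, isHermitian_add_transpose_self _, hc, ?_⟩
  have hMS' : Mᴴ * Sᴴ = Sᴴ * M := by
    simpa only [conjTranspose_mul, conjTranspose_conjTranspose] using
      (congrArg conjTranspose hMS).symm
  simp only [conjTranspose_smul, mul_add, add_mul, Matrix.mul_smul, Matrix.smul_mul, hMS, hMS']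

/-- If a matrix `M` on `ℂ^n` commutes with an invertible antilinear map `Θ`,
then `M` is pseudo-Hermitian: there is a Hermitian invertible `η` with `Mᴴ = η M η⁻¹`. -/
theorem pseudoHermitian_of_antilinear_symmetry
    (n : ℕ) (M : Matrix (Fin n) (Fin n) ℂ)
    (Θ : (Fin n → ℂ) → (Fin n → ℂ))
    (hbij : Function.Bijective Θ)
    (hadd : ∀ v w : Fin n → ℂ, Θ (v + w) = Θ v + Θ w)
    (hsmul : ∀ (a : ℂ) (v : Fin n → ℂ), Θ (a • v) = (starRingEnd ℂ a) • Θ v)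
    (hcomm : ∀ v : Fin n → ℂ, M.mulVec (Θ v) = Θ (M.mulVec v)) :
    ∃ η : Matrix (Fin n) (Fin n) ℂ, η.IsHermitian ∧ IsUnit η ∧ Mᴴ = η * M * η⁻¹ := by
  let Θₗ : (Fin n → ℂ) ≃ₗ⋆[ℂ] (Fin n → ℂ) :=
    .ofBijective { toFun := Θ, map_add' := hadd, map_smul' := hsmul } hbij
  obtain ⟨A, hA, hMA⟩ := M.exists_isUnit_conjTranspose_transpose_mul_eq_mul Θₗ hcomm
  obtain ⟨G, hG, hMG⟩ := Mᴴᵀ.exists_isUnit_transpose_mul_eq_mul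
  rw [transpose_transpose] at hMG
  obtain ⟨η, hη, hηu, hMη⟩ := exists_isHermitian_isUnit_conjTranspose_mul_eq_mul (hG.mul hA)
    (by rw [← mul_assoc, hMG, mul_assoc, hMA, mul_assoc])
  refine ⟨η, hη, hηu, ?_⟩
  rw [← hMη, mul_nonsing_inv_cancel_right _ _ ((isUnit_iff_isUnit_det η).mp hηu)]
end

section
/- For G(α,β) = [[β+α, β−α],[α−β, −α−β]] with αβ > 0, the Krein phase rigidity of a τ₃-normalized eigenvector equals 2√(|α||β|)/(|α|+|β|), which vanishes as α → 0 with β fixed nonzero. -/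
/-!
Writing `G(α, β) = τ₃ H` with `H = !![β + α, β - α; β - α, β + α]` real symmetric, one finds
`G² = 4αβ`, so every eigenvalue `ω` satisfies `ω² = 4αβ > 0` and is real. The off-diagonal part
of `G` contributes only an imaginary part to `ψ* G ψ`, so taking real parts in
`ψ* G ψ = ω ‖ψ‖²` gives `ω ‖ψ‖² = (α + β) ψ* τ₃ ψ = ±(α + β)`. Squaring,
`4αβ ‖ψ‖⁴ = (α + β)²`, i.e. `‖ψ‖² = (|α| + |β|) / (2 √(|α| |β|))`.
-/

open Matrix ComplexOrder

theorem eigenvalue_sq_eq_of_mul_self_eq_smul_one {R n : Type*} [CommRing R] [IsDomain R]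
    [Fintype n] [DecidableEq n] {A : Matrix n n R} {c ω : R} (hA : A * A = c • 1)
    {v : n → R} (hv : v ≠ 0) (hAv : A *ᵥ v = ω • v) : ω ^ 2 = c := by
  have h : (ω ^ 2 - c) • v = 0 := by
    have := mulVec_mulVec v A A
    rw [hA, hAv, mulVec_smul, hAv, smul_mulVec, one_mulVec, smul_smul] at this
    rw [sub_smul, sq, this, sub_self]
  exact sub_eq_zero.1 ((smul_eq_zero.1 h).resolve_right hv)

theorem Complex.im_eq_zero_of_sq_eq_ofReal_pos {z : ℂ} {c : ℝ} (hc : 0 < c)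
    (h : z ^ 2 = c) : z.im = 0 := by
  have hre := congrArg Complex.re h
  have him := congrArg Complex.im h
  simp only [sq, Complex.mul_re, Complex.mul_im, Complex.ofReal_re, Complex.ofReal_im] at hre him
  have hre0 : z.re ≠ 0 := fun h0 => by nlinarith [sq_nonneg z.im, h0]
  exact (mul_eq_zero.1 (by linarith : z.re * z.im = 0)).resolve_left hre0

theorem inv_eq_two_sqrt_div_abs_add {α β N : ℝ} (hαβ : 0 < α * β) (hN : 0 ≤ N)
    (h : 4 * α * β * N ^ 2 = (α + β) ^ 2) :
    N⁻¹ = 2 * √(|α| * |β|) / (|α| + |β|) := by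
  have hab : |α| * |β| = α * β := by rw [← abs_mul, abs_of_pos hαβ]
  have hsum : |α + β| = |α| + |β| := by
    rw [abs_add_eq_add_abs_iff]
    rcases mul_pos_iff.1 hαβ with h | h
    · exact .inl ⟨h.1.le, h.2.le⟩
    · exact .inr ⟨h.1.le, h.2.le⟩
  have hq : 0 < |α| + |β| :=
    add_pos_of_pos_of_nonneg (abs_pos.2 (left_ne_zero_of_mul hαβ.ne')) (abs_nonneg β)
  have hpN : 2 * √(|α| * |β|) * N = |α| + |β| := by
    refine (sq_eq_sq₀ (by positivity) hq.le).1 ?_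
    rw [mul_pow, mul_pow, Real.sq_sqrt (by positivity), hab, ← hsum, sq_abs, ← h]
    ring
  rw [eq_div_iff hq.ne', ← hpN]
  field_simp [show N ≠ 0 by rintro rfl; simp at hpN; linarith]

theorem tendsto_two_sqrt_div_abs_add_nhds_zero {β : ℝ} (hβ : β ≠ 0) :
    Filter.Tendsto (fun a : ℝ => 2 * √(|a| * |β|) / (|a| + |β|)) (nhds 0) (nhds 0) := by
  have hcont : ContinuousAt (fun a : ℝ => 2 * √(|a| * |β|) / (|a| + |β|)) 0 :=
    ContinuousAt.div (by fun_prop) (by fun_prop) (by simpa using hβ)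
  simpa using hcont.tendsto

/-- `τ₃` times the real symmetric matrix `!![a, b; b, a]`; the paper's `G(α, β)` is
`kreinMatrix (β + α) (β - α)`. -/
def kreinMatrix (a b : ℝ) : Matrix (Fin 2) (Fin 2) ℂ :=
  !![(a : ℂ), b; -b, -a]

theorem kreinMatrix_mul_self (a b : ℝ) :
    kreinMatrix a b * kreinMatrix a b = ((a ^ 2 - b ^ 2 : ℝ) : ℂ) • 1 := by
  ext i j
  fin_cases i <;> fin_cases j <;> simp [kreinMatrix, Matrix.mul_apply, Fin.sum_univ_two] <;> ring

-- The off-diagonal entries contribute `b (x̄ y - ȳ x)`, which is purely imaginary.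
theorem re_star_dotProduct_kreinMatrix_mulVec (a b : ℝ) (ψ : Fin 2 → ℂ) :
    (star ψ ⬝ᵥ kreinMatrix a b *ᵥ ψ).re = a * (star ψ ⬝ᵥ !![1, 0; 0, (-1 : ℂ)] *ᵥ ψ).re := by
  simp [kreinMatrix, dotProduct, mulVec, Fin.sum_univ_two]
  ring

/-- For `G(α,β)` with `αβ > 0`, the Krein phase rigidity `r = 1/⟨ψ|ψ⟩` of a
τ₃-normalized eigenvector `ψ` equals `2√(|α||β|)/(|α|+|β|)`, a quantity which
vanishes as `α → 0` with `β` fixed nonzero. -/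
theorem single_mode_krein_phase_rigidity
    (α β : ℝ) (hαβ : 0 < α * β)
    (G : Matrix (Fin 2) (Fin 2) ℂ)
    (hG : G = !![((β + α : ℝ) : ℂ), ((β - α : ℝ) : ℂ);
                 ((α - β : ℝ) : ℂ), ((-α - β : ℝ) : ℂ)])
    (ω : ℂ) (ψ : Fin 2 → ℂ) (hψ : ψ ≠ 0)
    (heig : G.mulVec ψ = ω • ψ)
    (hnorm : star ψ ⬝ᵥ (!![1, 0; 0, (-1 : ℂ)]).mulVec ψ = 1 ∨
             star ψ ⬝ᵥ (!![1, 0; 0, (-1 : ℂ)]).mulVec ψ = -1) :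
    (star ψ ⬝ᵥ ψ)⁻¹ = ((2 * Real.sqrt (|α| * |β|) / (|α| + |β|) : ℝ) : ℂ) ∧
    (β ≠ 0 → Filter.Tendsto (fun a : ℝ => 2 * Real.sqrt (|a| * |β|) / (|a| + |β|))
        (nhds 0) (nhds 0)) := by
  have hGk : G = kreinMatrix (β + α) (β - α) := by
    subst hG
    ext i j
    fin_cases i <;> fin_cases j <;> simp [kreinMatrix]
    ring
  subst hGk
  have hω : ω ^ 2 = ((4 * α * β : ℝ) : ℂ) := by
    rw [eigenvalue_sq_eq_of_mul_self_eq_smul_one (kreinMatrix_mul_self _ _) hψ heig]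
    congr 1
    ring
  obtain ⟨w, rfl⟩ : ∃ w : ℝ, (w : ℂ) = ω :=
    ⟨ω.re, Complex.ext rfl (by simp [Complex.im_eq_zero_of_sq_eq_ofReal_pos (by linarith) hω])⟩
  have hw : w ^ 2 = 4 * α * β := by exact_mod_cast hω
  obtain ⟨N, hN0, hN⟩ := RCLike.nonneg_iff_exists_ofReal.mp (dotProduct_star_self_nonneg ψ)
  set K := (star ψ ⬝ᵥ !![1, 0; 0, (-1 : ℂ)] *ᵥ ψ).re with hK
  have hK2 : K ^ 2 = 1 := by
    rcases hnorm with h | h <;> rw [hK, h] <;> norm_num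
  have hwN : w * N = (β + α) * K := by
    rw [hK, ← re_star_dotProduct_kreinMatrix_mulVec, heig, dotProduct_smul, ← hN]
    simp
  have hN2 : 4 * α * β * N ^ 2 = (α + β) ^ 2 := by
    linear_combination (w * N + (β + α) * K) * hwN - N ^ 2 * hw + (β + α) ^ 2 * hK2
  refine ⟨?_, tendsto_two_sqrt_div_abs_add_nhds_zero⟩
  rw [← hN, ← inv_eq_two_sqrt_div_abs_add hαβ hN0 hN2]
  simp
end

section
/- Let G be a diagonalizable 2N×2N matrix with real spectrum, satisfying G† = τ₃ G τ₃, G* = −τ₁ G τ₁, and [G, τ₁] = 0. Then every eigenvalue ω of G admits eigenvectors of both Krein signatures: there exist eigenvectors ψ⁺, ψ⁻ for ω with ⟨ψ⁺|τ₃|ψ⁺⟩ > 0 and ⟨ψ⁻|τ₃|ψ⁻⟩ < 0. -/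
open Matrix Kronecker

noncomputable def sigma1 : Matrix (Fin 2) (Fin 2) ℂ := !![0, 1; 1, 0]
noncomputable def sigma3 : Matrix (Fin 2) (Fin 2) ℂ := !![1, 0; 0, -1]

noncomputable def tau1 (N : ℕ) : Matrix (Fin N × Fin 2) (Fin N × Fin 2) ℂ :=
  (1 : Matrix (Fin N) (Fin N) ℂ) ⊗ₖ sigma1
noncomputable def tau3 (N : ℕ) : Matrix (Fin N × Fin 2) (Fin N × Fin 2) ℂ :=
  (1 : Matrix (Fin N) (Fin N) ℂ) ⊗ₖ sigma3

lemma sigma1_mul_sigma1 : sigma1 * sigma1 = 1 := by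
  simp [sigma1, Matrix.mul_fin_two, Matrix.one_fin_two]

lemma sigma3_mul_sigma3 : sigma3 * sigma3 = 1 := by
  simp [sigma3, Matrix.mul_fin_two, Matrix.one_fin_two]

lemma tau1_sq (N : ℕ) : tau1 N * tau1 N = 1 := by
  rw [tau1, ← Matrix.mul_kronecker_mul, one_mul, sigma1_mul_sigma1, Matrix.one_kronecker_one]

lemma tau3_sq (N : ℕ) : tau3 N * tau3 N = 1 := by
  rw [tau3, ← Matrix.mul_kronecker_mul, one_mul, sigma3_mul_sigma3, Matrix.one_kronecker_one]

lemma tau3_herm (N : ℕ) : (tau3 N)ᴴ = tau3 N := by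
  ext ⟨i, a⟩ ⟨j, b⟩
  simp only [tau3, Matrix.conjTranspose_apply, Matrix.kroneckerMap_apply, Matrix.one_apply,
    sigma3]
  fin_cases a <;> fin_cases b <;> by_cases h : i = j <;> simp [h, eq_comm]

lemma tau1_herm (N : ℕ) : (tau1 N)ᴴ = tau1 N := by
  ext ⟨i, a⟩ ⟨j, b⟩
  simp only [tau1, Matrix.conjTranspose_apply, Matrix.kroneckerMap_apply, Matrix.one_apply,
    sigma1]
  fin_cases a <;> fin_cases b <;> by_cases h : i = j <;> simp [h, eq_comm]

lemma tau1_tau3_anticomm (N : ℕ) : tau1 N * tau3 N = -(tau3 N * tau1 N) := by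
  rw [tau1, tau3, ← Matrix.mul_kronecker_mul, ← Matrix.mul_kronecker_mul, one_mul]
  ext ⟨i, a⟩ ⟨j, b⟩
  simp only [Matrix.kroneckerMap_apply, Matrix.neg_apply, sigma1, sigma3,
    Matrix.mul_fin_two]
  fin_cases a <;> fin_cases b <;> simp

lemma tau1_tau3_tau1 (N : ℕ) : tau1 N * (tau3 N * tau1 N) = -(tau3 N) := by
  rw [← mul_assoc, tau1_tau3_anticomm, neg_mul, mul_assoc, tau1_sq, mul_one]

/-- If `G` is diagonalizable with real spectrum, τ₃-pseudo-Hermitian, charge-conjugation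
symmetric (`G* = −τ₁ G τ₁`), and commutes with `τ₁`, then every eigenvalue of `G` admits
eigenvectors of both Krein signatures (a Krein collision at every eigenvalue). -/
theorem krein_collision_of_phase_dependent_transport
    (N : ℕ) (G : Matrix (Fin N × Fin 2) (Fin N × Fin 2) ℂ)
    (hdiag : ∃ (P : Matrix (Fin N × Fin 2) (Fin N × Fin 2) ℂ) (D : Fin N × Fin 2 → ℂ),
      IsUnit P ∧ G = P * Matrix.diagonal D * P⁻¹ ∧ ∀ i, (D i).im = 0)
    (hGps : Gᴴ = tau3 N * G * tau3 N)
    (hGcc : G.map (starRingEnd ℂ) = -(tau1 N * G * tau1 N))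
    (hcomm : G * tau1 N = tau1 N * G) :
    ∀ ω : ℂ, (∃ v : Fin N × Fin 2 → ℂ, v ≠ 0 ∧ G.mulVec v = ω • v) →
      ∃ ψp ψm : Fin N × Fin 2 → ℂ,
        ψp ≠ 0 ∧ ψm ≠ 0 ∧
        G.mulVec ψp = ω • ψp ∧ G.mulVec ψm = ω • ψm ∧
        0 < (star ψp ⬝ᵥ (tau3 N).mulVec ψp).re ∧
        (star ψm ⬝ᵥ (tau3 N).mulVec ψm).re < 0 := by
  intro ω hv
  obtain ⟨v, hv0, hvom⟩ := hv
  obtain ⟨P, D, hP, hGPD, hDre⟩ := hdiag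
  have hPdet : IsUnit P.det := (Matrix.isUnit_iff_isUnit_det P).mp hP
  have hPinv : P⁻¹ * P = 1 := Matrix.nonsing_inv_mul P hPdet
  have hPinv' : P * P⁻¹ = 1 := Matrix.mul_nonsing_inv P hPdet
  -- τ₃ G = Gᴴ τ₃
  have hts : tau3 N * G = Gᴴ * tau3 N := by
    rw [hGps, mul_assoc, mul_assoc, tau3_sq, mul_one]
  -- the eigenvalue ω is real
  set c : Fin N × Fin 2 → ℂ := P⁻¹.mulVec v with hc
  have hdc : ∀ j, D j * c j = ω * c j := by
    have h1 : (Matrix.diagonal D).mulVec c = ω • c := by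
      have h0 := congrArg (fun x => P⁻¹.mulVec x) hvom
      simp only [Matrix.mulVec_smul] at h0
      rw [hGPD, Matrix.mulVec_mulVec, ← mul_assoc, ← mul_assoc, hPinv, one_mul,
        ← Matrix.mulVec_mulVec] at h0
      exact h0
    intro j
    have h2 := congrFun h1 j
    rw [Matrix.mulVec_diagonal] at h2
    simpa using h2
  have hc0 : c ≠ 0 := by
    intro h
    apply hv0
    have hPc : P.mulVec c = v := by
      rw [hc, Matrix.mulVec_mulVec, hPinv', Matrix.one_mulVec]
    rw [← hPc, h, Matrix.mulVec_zero]
  obtain ⟨j0, hj0⟩ : ∃ j, c j ≠ 0 := by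
    by_contra h
    push_neg at h
    exact hc0 (funext h)
  have homega : ω = D j0 := (mul_right_cancel₀ hj0 (hdc j0)).symm
  have hωim : ω.im = 0 := homega ▸ hDre j0
  -- key pseudo-adjoint relation
  have hKG : ∀ (u w : Fin N × Fin 2 → ℂ) (μ : ℂ), μ.im = 0 → G.mulVec u = μ • u →
      star u ⬝ᵥ (tau3 N).mulVec (G.mulVec w) = μ * (star u ⬝ᵥ (tau3 N).mulVec w) := by
    intro u w μ hμ hu
    have hμc : star μ = μ := Complex.conj_eq_iff_im.mpr hμ
    calc star u ⬝ᵥ (tau3 N).mulVec (G.mulVec w)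
        = star u ⬝ᵥ (Gᴴ * tau3 N).mulVec w := by
          rw [Matrix.mulVec_mulVec, hts]
      _ = star u ⬝ᵥ Gᴴ.mulVec ((tau3 N).mulVec w) := by rw [Matrix.mulVec_mulVec]
      _ = (star u ᵥ* Gᴴ) ⬝ᵥ ((tau3 N).mulVec w) := by rw [Matrix.dotProduct_mulVec]
      _ = star (G.mulVec u) ⬝ᵥ ((tau3 N).mulVec w) := by rw [Matrix.star_mulVec]
      _ = μ * (star u ⬝ᵥ (tau3 N).mulVec w) := by
          rw [hu, star_smul, smul_dotProduct, hμc, smul_eq_mul]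
  -- eigenvectors with different real eigenvalues are τ₃-orthogonal to v
  have hcross : ∀ (u : Fin N × Fin 2 → ℂ) (μ : ℂ), μ.im = 0 → μ ≠ ω →
      G.mulVec u = μ • u → star u ⬝ᵥ (tau3 N).mulVec v = 0 := by
    intro u μ hμ hne hu
    have h1 := hKG u v μ hμ hu
    rw [hvom, Matrix.mulVec_smul, dotProduct_smul, smul_eq_mul] at h1
    have h2 : (μ - ω) * (star u ⬝ᵥ (tau3 N).mulVec v) = 0 := by linear_combination -h1
    exact (mul_eq_zero.mp h2).resolve_left (sub_ne_zero.mpr hne)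
  -- hermitian symmetry of the Krein form
  have hsym : ∀ u w : Fin N × Fin 2 → ℂ,
      star w ⬝ᵥ (tau3 N).mulVec u = star (star u ⬝ᵥ (tau3 N).mulVec w) := by
    intro u w
    rw [Matrix.star_dotProduct, Matrix.star_mulVec, tau3_herm, ← Matrix.dotProduct_mulVec]
  have hreal : ∀ u : Fin N × Fin 2 → ℂ, (star u ⬝ᵥ (tau3 N).mulVec u).im = 0 := by
    intro u
    have h := (hsym u u).symm
    have : (starRingEnd ℂ) (star u ⬝ᵥ (tau3 N).mulVec u) = star u ⬝ᵥ (tau3 N).mulVec u := h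
    exact Complex.conj_eq_iff_im.mp this
  -- there is an ω-eigenvector pairing nontrivially with v
  have hexu : ∃ u, G.mulVec u = ω • u ∧ star u ⬝ᵥ (tau3 N).mulVec v ≠ 0 := by
    by_contra hcon
    push_neg at hcon
    have hcol : ∀ j, G.mulVec (fun i => P i j) = D j • (fun i => P i j) := by
      intro j
      have h1 : ∀ i, (G * P) i j = (P * Matrix.diagonal D) i j := by
        intro i
        rw [hGPD, mul_assoc, hPinv, mul_one]
      funext i
      have h2 := h1 i
      rw [Matrix.mul_diagonal] at h2
      show (G *ᵥ fun i => P i j) i = (D j • fun i => P i j) i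
      simp only [Matrix.mulVec, dotProduct, Pi.smul_apply, smul_eq_mul]
      calc ∑ k, G i k * P k j = (G * P) i j := (Matrix.mul_apply).symm
        _ = P i j * D j := h2
        _ = D j * P i j := mul_comm _ _
    have hall : ∀ j, star (fun i => P i j) ⬝ᵥ (tau3 N).mulVec v = 0 := by
      intro j
      by_cases h : D j = ω
      · exact hcon _ (by rw [hcol j, h])
      · exact hcross _ (D j) (hDre j) h (hcol j)
    have hPHv : Pᴴ.mulVec ((tau3 N).mulVec v) = 0 := by
      funext j
      have h := hall j
      simpa [Matrix.mulVec, dotProduct, Matrix.conjTranspose_apply] using h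
    have hτv : (tau3 N).mulVec v = 0 := by
      have h2 : (P⁻¹)ᴴ.mulVec (Pᴴ.mulVec ((tau3 N).mulVec v)) = (tau3 N).mulVec v := by
        rw [Matrix.mulVec_mulVec, ← Matrix.conjTranspose_mul, hPinv',
          Matrix.conjTranspose_one, Matrix.one_mulVec]
      rw [← h2, hPHv, Matrix.mulVec_zero]
    apply hv0
    have h3 : (tau3 N).mulVec ((tau3 N).mulVec v) = v := by
      rw [Matrix.mulVec_mulVec, tau3_sq, Matrix.one_mulVec]
    rw [← h3, hτv, Matrix.mulVec_zero]
  obtain ⟨u, huv, hKuv⟩ := hexu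
  -- produce an ω-eigenvector with nonzero Krein form
  have hψex : ∃ ψ, G.mulVec ψ = ω • ψ ∧ star ψ ⬝ᵥ (tau3 N).mulVec ψ ≠ 0 := by
    by_cases hvv : star v ⬝ᵥ (tau3 N).mulVec v ≠ 0
    · exact ⟨v, hvom, hvv⟩
    · by_cases huu : star u ⬝ᵥ (tau3 N).mulVec u ≠ 0
      · exact ⟨u, huv, huu⟩
      · push_neg at hvv huu
        set q : ℂ := star u ⬝ᵥ (tau3 N).mulVec v with hq
        refine ⟨v + q • u, ?_, ?_⟩
        · rw [Matrix.mulVec_add, Matrix.mulVec_smul, hvom, huv]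
          module
        · have hvu : star v ⬝ᵥ (tau3 N).mulVec u = star q := hsym u v
          have hexp : star (v + q • u) ⬝ᵥ (tau3 N).mulVec (v + q • u)
              = (star v ⬝ᵥ (tau3 N).mulVec v) + q * (star v ⬝ᵥ (tau3 N).mulVec u)
                + star q * (star u ⬝ᵥ (tau3 N).mulVec v)
                + star q * q * (star u ⬝ᵥ (tau3 N).mulVec u) := by
            simp only [star_add, star_smul, Matrix.mulVec_add, Matrix.mulVec_smul,
              dotProduct_add, add_dotProduct, smul_dotProduct,
              dotProduct_smul, smul_eq_mul]
            ring
          rw [hexp, hvv, huu, hvu, ← hq]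
          have hq2 : q * star q = (Complex.normSq q : ℂ) := by
            rw [Complex.star_def, Complex.mul_conj]
          intro h
          apply hKuv
          have h2 : (2 : ℂ) * (Complex.normSq q : ℂ) = 0 := by
            rw [← h, ← hq2]; ring
          have h3 : Complex.normSq q = 0 := by
            have := mul_eq_zero.mp h2
            rcases this with h4 | h4
            · norm_num at h4
            · exact_mod_cast h4
          exact Complex.normSq_eq_zero.mp h3
  obtain ⟨ψ, hψe, hψK⟩ := hψex
  have hrim : (star ψ ⬝ᵥ (tau3 N).mulVec ψ).im = 0 := hreal ψ
  have hrre : (star ψ ⬝ᵥ (tau3 N).mulVec ψ).re ≠ 0 := by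
    intro h
    exact hψK (Complex.ext (by simpa using h) (by simpa using hrim))
  have hψ0 : ψ ≠ 0 := by
    intro h
    apply hψK
    rw [h]
    simp
  have hτψe : G.mulVec ((tau1 N).mulVec ψ) = ω • (tau1 N).mulVec ψ := by
    rw [Matrix.mulVec_mulVec, hcomm, ← Matrix.mulVec_mulVec, hψe, Matrix.mulVec_smul]
  have hτψ0 : (tau1 N).mulVec ψ ≠ 0 := by
    intro h
    apply hψ0
    have h2 : (tau1 N).mulVec ((tau1 N).mulVec ψ) = ψ := by
      rw [Matrix.mulVec_mulVec, tau1_sq, Matrix.one_mulVec]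
    rw [← h2, h, Matrix.mulVec_zero]
  have hflip : star ((tau1 N).mulVec ψ) ⬝ᵥ (tau3 N).mulVec ((tau1 N).mulVec ψ)
      = -(star ψ ⬝ᵥ (tau3 N).mulVec ψ) := by
    rw [Matrix.star_mulVec, tau1_herm, Matrix.mulVec_mulVec, ← Matrix.dotProduct_mulVec,
      Matrix.mulVec_mulVec, tau1_tau3_tau1, Matrix.neg_mulVec, dotProduct_neg]
  rcases lt_or_gt_of_ne hrre with hneg | hpos
  · refine ⟨(tau1 N).mulVec ψ, ψ, hτψ0, hψ0, hτψe, hψe, ?_, hneg⟩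
    rw [hflip]
    simpa using hneg
  · refine ⟨ψ, (tau1 N).mulVec ψ, hψ0, hτψ0, hψe, hτψe, hpos, ?_⟩
    rw [hflip]
    simpa using hpos
end

section
/- Let T be the N×N nilpotent left-shift matrix with T e_{j+1} = e_j. The matrix M = i t (T† ⊗ |+⟩⟨+| − T ⊗ |−⟩⟨−|) on ℂ^N ⊗ ℂ², where |±⟩ = (e₁ ± e₂)/√2 and t ≠ 0, is nilpotent with exactly two Jordan blocks, each of size N; in particular M^N = 0 and M^{N−1} ≠ 0. -/
/-! With `P = |+⟩⟨+|` and `Q = |−⟩⟨−|` a complete pair of orthogonal idempotents,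
`M = c (Tᴴ ⊗ P + (−T) ⊗ Q)` with `c = i t`, hence `M ^ k = c ^ k (Tᴴ ^ k ⊗ P + (−T) ^ k ⊗ Q)`,
and `M` is nilpotent of exactly the same order `N` as the shift `T`. Conjugating by `1 ⊗ H`,
`H` the `2 × 2` Hadamard matrix, turns `P` and `Q` into the diagonal matrix units, so `M` has
the rank of the block-diagonal matrix with blocks `Tᴴ` and `−T`, that is `2 (N − 1)`. So there
are two Jordan blocks, and since the largest has size `N` and the sizes add up to `2 N`, both
have size `N`. -/

open Matrix Kronecker
open scoped ComplexOrder

theorem Submodule.finrank_prod_eq {K V W : Type*} [DivisionRing K] [AddCommGroup V] [Module K V]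
    [AddCommGroup W] [Module K W] (p : Submodule K V) (q : Submodule K W)
    [FiniteDimensional K p] [FiniteDimensional K q] :
    Module.finrank K (p.prod q) = Module.finrank K p + Module.finrank K q := by
  have hinj : Function.Injective (p.subtype.prodMap q.subtype) :=
    Prod.map_injective.mpr ⟨p.injective_subtype, q.injective_subtype⟩
  rw [← Module.finrank_prod, ← LinearMap.finrank_range_of_inj hinj, LinearMap.range_prodMap,
    Submodule.range_subtype, Submodule.range_subtype]

def prodFinTwoEquivSum (α : Type*) : α × Fin 2 ≃ α ⊕ α :=
  (Equiv.prodComm _ _).trans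
    ((finTwoEquiv.prodCongr (Equiv.refl α)).trans (Equiv.boolProdEquivSum α))

def shiftMatrix (R : Type*) [Zero R] [One R] (N : ℕ) : Matrix (Fin N) (Fin N) R :=
  of fun i j => if (i : ℕ) + 1 = j then 1 else 0

noncomputable def projPlus : Matrix (Fin 2) (Fin 2) ℂ := ((1 : ℂ) / 2) • !![1, 1; 1, 1]

noncomputable def projMinus : Matrix (Fin 2) (Fin 2) ℂ := ((1 : ℂ) / 2) • !![1, -1; -1, 1]

def hadamardTwo : Matrix (Fin 2) (Fin 2) ℂ := !![1, 1; 1, -1]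

namespace Matrix

section Kronecker

variable {R : Type*} {l m n p : Type*}

theorem neg_kronecker [Ring R] (A : Matrix l m R) (B : Matrix n p R) :
    (-A) ⊗ₖ B = -(A ⊗ₖ B) := by
  ext; simp [neg_mul]

theorem kronecker_ne_zero [MulZeroClass R] [NoZeroDivisors R] {A : Matrix l m R}
    {B : Matrix n p R} (hA : A ≠ 0) (hB : B ≠ 0) : A ⊗ₖ B ≠ 0 := by
  obtain ⟨i, j, hij⟩ : ∃ i j, A i j ≠ 0 := by simpa [← Matrix.ext_iff] using hA
  obtain ⟨a, b, hab⟩ : ∃ a b, B a b ≠ 0 := by simpa [← Matrix.ext_iff] using hB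
  intro h
  exact mul_ne_zero hij hab (by simpa using congrFun (congrFun h (i, a)) (j, b))

variable [CommSemiring R] [Fintype m] [Fintype n] [DecidableEq n] {ι : Type*} [Fintype ι]
  [DecidableEq ι] {e : ι → Matrix n n R}

theorem sum_kronecker_mul_kronecker (he : OrthogonalIdempotents e) (A : ι → Matrix l m R)
    (B : Matrix m p R) (j : ι) :
    (∑ i, A i ⊗ₖ e i) * (B ⊗ₖ e j) = (A j * B) ⊗ₖ e j := by
  simp only [Matrix.sum_mul, ← mul_kronecker_mul, he.mul_eq]
  rw [Fintype.sum_eq_single j fun i hij => by rw [if_neg hij, kronecker_zero], if_pos rfl]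

theorem pow_sum_kronecker [DecidableEq m] (he : CompleteOrthogonalIdempotents e)
    (A : ι → Matrix m m R) (k : ℕ) :
    (∑ i, A i ⊗ₖ e i) ^ k = ∑ i, (A i ^ k) ⊗ₖ e i := by
  induction k with
  | zero =>
    have : ∑ i, (1 : Matrix m m R) ⊗ₖ e i = 1 ⊗ₖ ∑ i, e i := by
      ext; simp [kroneckerMap_apply, Finset.mul_sum, sum_apply]
    simp only [pow_zero, this, he.complete, one_kronecker_one]
  | succ k ih =>
    simp only [pow_succ, ih, Matrix.mul_sum,
      sum_kronecker_mul_kronecker he.toOrthogonalIdempotents]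

end Kronecker

section Rank

variable {K : Type*} [Field K] {m m' n n' : Type*} [Fintype n] [Fintype n']

theorem mulVecLin_fromBlocks_zero (A : Matrix m n K) (B : Matrix m' n' K) :
    (fromBlocks A 0 0 B).mulVecLin =
      (LinearEquiv.sumArrowLequivProdArrow m m' K K).symm.toLinearMap ∘ₗ
        (A.mulVecLin.prodMap B.mulVecLin) ∘ₗ
          (LinearEquiv.sumArrowLequivProdArrow n n' K K).toLinearMap := by
  ext x (i | i) <;> simp [fromBlocks_mulVec] <;> rfl

theorem rank_fromBlocks_zero (A : Matrix m n K) (B : Matrix m' n' K) :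
    (fromBlocks A 0 0 B).rank = A.rank + B.rank := by
  rw [rank, mulVecLin_fromBlocks_zero, LinearMap.range_comp,
    LinearMap.range_comp_of_range_eq_top _ (LinearEquiv.range _), LinearEquiv.finrank_map_eq,
    LinearMap.range_prodMap, Submodule.finrank_prod_eq, rank, rank]

theorem rank_kronecker_single_add_kronecker_single (A B : Matrix m n K) :
    (A ⊗ₖ single (0 : Fin 2) (0 : Fin 2) 1 + B ⊗ₖ single (1 : Fin 2) (1 : Fin 2) 1).rank =
      A.rank + B.rank := by
  have : reindex (prodFinTwoEquivSum m) (prodFinTwoEquivSum n)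
      (A ⊗ₖ single (0 : Fin 2) (0 : Fin 2) 1 + B ⊗ₖ single (1 : Fin 2) (1 : Fin 2) 1) =
        fromBlocks A 0 0 B := by
    ext (i | i) (j | j) <;> simp [prodFinTwoEquivSum, finTwoEquiv]
  rw [← rank_reindex (prodFinTwoEquivSum m) (prodFinTwoEquivSum n), this, rank_fromBlocks_zero]

theorem rank_neg (A : Matrix m n K) : (-A).rank = A.rank := by
  rw [← neg_one_smul K A, rank_smul_of_mem_nonZeroDivisors]
  exact isUnit_one.neg.mem_nonZeroDivisors

end Rank

end Matrix

namespace shiftMatrix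

variable {R : Type*} {N : ℕ}

theorem pow_apply [Semiring R] (k : ℕ) (i j : Fin N) :
    (shiftMatrix R N ^ k) i j = if (i : ℕ) + k = j then 1 else 0 := by
  induction k generalizing j with
  | zero => simp [one_apply, Fin.ext_iff]
  | succ k ih =>
    simp only [pow_succ, mul_apply, ih]
    simp only [shiftMatrix, of_apply, mul_boole, ← ite_and]
    split_ifs with h
    · rw [Finset.sum_eq_single ⟨i + k, by omega⟩] <;> simp [Fin.ext_iff] <;> omega
    · exact Finset.sum_eq_zero fun l _ => if_neg (by omega)

theorem pow_self [Semiring R] : shiftMatrix R N ^ N = 0 := by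
  ext i j
  rw [pow_apply, if_neg (by omega), Matrix.zero_apply]

theorem pow_pred_ne_zero [Semiring R] [Nontrivial R] (hN : 0 < N) :
    shiftMatrix R N ^ (N - 1) ≠ 0 := fun h => by
  simpa [pow_apply] using congrFun (congrFun h ⟨0, hN⟩) ⟨N - 1, by omega⟩

theorem mul_transpose [NonAssocSemiring R] :
    shiftMatrix R N * (shiftMatrix R N)ᵀ =
      diagonal fun i : Fin N => if (i : ℕ) + 1 < N then 1 else 0 := by
  ext i j
  simp only [mul_apply, transpose_apply, shiftMatrix, of_apply, mul_boole, ← ite_and,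
    diagonal_apply]
  split_ifs with h
  · obtain ⟨rfl, hi⟩ := h
    rw [Finset.sum_eq_single ⟨i + 1, hi⟩] <;> simp [Fin.ext_iff]
    omega
  · exact Finset.sum_eq_zero fun l _ => if_neg fun hl => h ⟨Fin.ext (by omega), by omega⟩

theorem mul_transpose_mul [NonAssocSemiring R] :
    shiftMatrix R N * (shiftMatrix R N)ᵀ * shiftMatrix R N = shiftMatrix R N := by
  ext i j
  rw [mul_transpose, diagonal_mul]
  simp only [shiftMatrix, of_apply]
  split_ifs <;> simp
  omega

theorem rank_eq [Field R] : (shiftMatrix R N).rank = N - 1 := by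
  classical
  have hrank : (shiftMatrix R N).rank = (shiftMatrix R N * (shiftMatrix R N)ᵀ).rank := by
    refine le_antisymm ?_ (rank_mul_le_left _ _)
    conv_lhs => rw [← mul_transpose_mul]
    exact rank_mul_le_left _ _
  have hcount (i : Fin N) : (i : ℕ) + 1 < N ↔ (i : ℕ) < N - 1 := by omega
  rw [hrank, mul_transpose, rank_diagonal, Fintype.card_subtype]
  simp only [ne_eq, ite_eq_right_iff, one_ne_zero, imp_false, not_not, hcount]
  rw [Fin.card_filter_val_lt]
  omega

end shiftMatrix

theorem completeOrthogonalIdempotents_projPlus_projMinus :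
    CompleteOrthogonalIdempotents ![projPlus, projMinus] := by
  refine CompleteOrthogonalIdempotents.pair_iff.mpr ⟨?_, ?_⟩
  · rw [IsIdempotentElem]
    ext i j
    fin_cases i <;> fin_cases j <;> norm_num [projPlus, mul_apply, Fin.sum_univ_two]
  · ext i j
    fin_cases i <;> fin_cases j <;> norm_num [projPlus, projMinus, one_apply]

theorem projPlus_ne_zero : projPlus ≠ 0 := fun h => by
  simpa [projPlus] using congrFun (congrFun h 0) 0

theorem hadamardTwo_mul_projPlus_mul_hadamardTwo :
    hadamardTwo * projPlus * hadamardTwo = (2 : ℂ) • single 0 0 1 := by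
  ext i j
  fin_cases i <;> fin_cases j <;>
    norm_num [hadamardTwo, projPlus, mul_apply, Fin.sum_univ_two, single_apply]

theorem hadamardTwo_mul_projMinus_mul_hadamardTwo :
    hadamardTwo * projMinus * hadamardTwo = (2 : ℂ) • single 1 1 1 := by
  ext i j
  fin_cases i <;> fin_cases j <;>
    norm_num [hadamardTwo, projMinus, mul_apply, Fin.sum_univ_two, single_apply]

theorem isUnit_det_one_kronecker_hadamardTwo (n : Type*) [Fintype n] [DecidableEq n] :
    IsUnit ((1 : Matrix n n ℂ) ⊗ₖ hadamardTwo).det := by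
  rw [det_kronecker, det_one, one_pow, one_mul]
  refine IsUnit.pow _ (isUnit_iff_ne_zero.mpr ?_)
  norm_num [hadamardTwo, det_fin_two_of]

theorem rank_kronecker_projPlus_add_kronecker_projMinus {m n : Type*} [Fintype m]
    [DecidableEq m] [Fintype n] [DecidableEq n] (A B : Matrix m n ℂ) :
    (A ⊗ₖ projPlus + B ⊗ₖ projMinus).rank = A.rank + B.rank := by
  have hconj : ((1 : Matrix m m ℂ) ⊗ₖ hadamardTwo) * (A ⊗ₖ projPlus + B ⊗ₖ projMinus) *
      ((1 : Matrix n n ℂ) ⊗ₖ hadamardTwo) =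
      (2 : ℂ) • (A ⊗ₖ single 0 0 1 + B ⊗ₖ single 1 1 1) := by
    simp only [Matrix.mul_add, Matrix.add_mul, ← mul_kronecker_mul, Matrix.one_mul,
      Matrix.mul_one, hadamardTwo_mul_projPlus_mul_hadamardTwo,
      hadamardTwo_mul_projMinus_mul_hadamardTwo, kronecker_smul, smul_add]
  rw [← rank_mul_eq_left_of_isUnit_det _ _ (isUnit_det_one_kronecker_hadamardTwo n),
    ← rank_mul_eq_right_of_isUnit_det _ _ (isUnit_det_one_kronecker_hadamardTwo m),
    ← Matrix.mul_assoc, hconj,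
    rank_smul_of_mem_nonZeroDivisors _ (mem_nonZeroDivisors_of_ne_zero two_ne_zero),
    rank_kronecker_single_add_kronecker_single]

/-- The effective single-particle Hamiltonian of the open bosonic Kitaev chain at
`t = Δ`, `M = i t (Tᴴ ⊗ |+⟩⟨+| − T ⊗ |−⟩⟨−|)`, is nilpotent with exactly two Jordan
blocks of size `N` each: `M^N = 0`, `M^(N−1) ≠ 0`, and `rank M = 2N − 2`. -/
theorem open_bkc_jordan_structure
    (N : ℕ) (hN : 0 < N) (t : ℝ) (ht : t ≠ 0)
    (T : Matrix (Fin N) (Fin N) ℂ)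
    (hT : ∀ i j, T i j = if (i : ℕ) + 1 = (j : ℕ) then 1 else 0)
    (M : Matrix (Fin N × Fin 2) (Fin N × Fin 2) ℂ)
    (hM : M = (Complex.I * t) •
      (Tᴴ ⊗ₖ (((1 : ℂ)/2) • !![1, 1; 1, 1]) - T ⊗ₖ (((1 : ℂ)/2) • !![1, -1; -1, 1]))) :
    M ^ N = 0 ∧ M ^ (N - 1) ≠ 0 ∧ M.rank = 2 * N - 2 := by
  obtain rfl : T = shiftMatrix ℂ N := Matrix.ext hT
  set c : ℂ := Complex.I * t
  have hc : c ≠ 0 := mul_ne_zero Complex.I_ne_zero (Complex.ofReal_ne_zero.mpr ht)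
  have hM' :
      M = c • ((shiftMatrix ℂ N)ᴴ ⊗ₖ projPlus + (-shiftMatrix ℂ N) ⊗ₖ projMinus) := by
    rw [hM, sub_eq_add_neg, ← neg_kronecker]
    rfl
  have hpow (k : ℕ) : M ^ k = c ^ k • ∑ i,
      (![(shiftMatrix ℂ N)ᴴ, -shiftMatrix ℂ N] i ^ k) ⊗ₖ ![projPlus, projMinus] i := by
    rw [hM', ← pow_sum_kronecker completeOrthogonalIdempotents_projPlus_projMinus, smul_pow,
      Fin.sum_univ_two]
    rfl
  refine ⟨?_, fun h => ?_, ?_⟩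
  · simp [hpow, Fin.sum_univ_two, ← conjTranspose_pow, neg_pow (shiftMatrix ℂ N),
      shiftMatrix.pow_self]
  · -- right multiplication by `1 ⊗ P` keeps only the `Tᴴ`-component of `M ^ (N - 1)`
    have h0 := congrArg (· * ((1 : Matrix (Fin N) (Fin N) ℂ) ⊗ₖ ![projPlus, projMinus] 0)) h
    simp only [hpow, Matrix.smul_mul, Matrix.zero_mul, sum_kronecker_mul_kronecker
      completeOrthogonalIdempotents_projPlus_projMinus.toOrthogonalIdempotents, Matrix.mul_one,
      smul_eq_zero, pow_eq_zero_iff', hc, false_and, false_or] at h0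
    refine kronecker_ne_zero ?_ projPlus_ne_zero h0
    simpa [← conjTranspose_pow] using shiftMatrix.pow_pred_ne_zero (R := ℂ) hN
  · rw [hM', rank_smul_of_mem_nonZeroDivisors _ (mem_nonZeroDivisors_of_ne_zero hc),
      rank_kronecker_projPlus_add_kronecker_projMinus, rank_conjTranspose, rank_neg,
      shiftMatrix.rank_eq]
    omega
end
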